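/- arXiv:2207.07425 — 4 statements merged into one kernel-verified Lean document; each statement's English description precedes it below -/
import Mathlib

section
/- Let M be a 0-1 matrix whose 1-entries form an antichain boundary of a downwards-closed relation: the 1-entries of M can be enumerated as (r₁,c₁), ..., (r_m,c_m) with r₁ < r₂ < ... < r_m and c₁ > c₂ > ... > c_m. Then the grid rank of M is at most 1 when restricted to any 2-division: there is no 2-division of M in which each of the four cells contains a 1-entry and has combinatorial rank at least 2. In particular no rank-2 division of M exists. -/
/-- The cell of `A` with rows `[rl, rh)` and columns `[cl, ch)` contains a 1-entry. -/
def HasOne (A : ℕ → ℕ → Prop) (rl rh cl ch : ℕ) : Prop :=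
  ∃ i j, rl ≤ i ∧ i < rh ∧ cl ≤ j ∧ j < ch ∧ A i j

/-- The cell of `A` with rows `[rl, rh)` and columns `[cl, ch)` contains at least two
distinct rows. -/
def TwoRows (A : ℕ → ℕ → Prop) (rl rh cl ch : ℕ) : Prop :=
  ∃ i i', rl ≤ i ∧ i < rh ∧ rl ≤ i' ∧ i' < rh ∧ i ≠ i' ∧
    ∃ j, cl ≤ j ∧ j < ch ∧ ¬ (A i j ↔ A i' j)

/-- The cell of `A` with rows `[rl, rh)` and columns `[cl, ch)` contains at least two
distinct columns. -/
def TwoCols (A : ℕ → ℕ → Prop) (rl rh cl ch : ℕ) : Prop :=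
  ∃ j j', cl ≤ j ∧ j < ch ∧ cl ≤ j' ∧ j' < ch ∧ j ≠ j' ∧
    ∃ i, rl ≤ i ∧ i < rh ∧ ¬ (A i j ↔ A i j')

/-- Let `A` be an `n × n` 0-1 matrix whose 1-entries form a staircase: whenever
`A i j` and `A i' j'` hold, `i < i'` implies `j' < j`, and `i = i'` implies `j = j'`.
Then there is no 2-division of `A` in which each of the four cells contains a 1-entry
and has combinatorial rank at least 2 (at least two distinct rows and two distinct
columns); in particular no rank-2 division of `A` exists. -/
theorem stmt6 (n : ℕ) (A : ℕ → ℕ → Prop)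
    (hstair : ∀ i j i' j', i < n → j < n → i' < n → j' < n → A i j → A i' j' →
      (i < i' → j' < j) ∧ (i = i' → j = j')) :
    ¬ ∃ p q : ℕ, 0 < p ∧ p < n ∧ 0 < q ∧ q < n ∧
      ∀ rl rh cl ch : ℕ,
        ((rl = 0 ∧ rh = p) ∨ (rl = p ∧ rh = n)) →
        ((cl = 0 ∧ ch = q) ∨ (cl = q ∧ ch = n)) →
        HasOne A rl rh cl ch ∧ TwoRows A rl rh cl ch ∧ TwoCols A rl rh cl ch := by
  rintro ⟨p, q, hp, hpn, hq, hqn, h⟩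
  obtain ⟨⟨i0, j0, _, hi0, _, hj0, hA0⟩, -, -⟩ :=
    h 0 p 0 q (Or.inl ⟨rfl, rfl⟩) (Or.inl ⟨rfl, rfl⟩)
  obtain ⟨⟨i3, j3, hi3, hi3n, hj3, hj3n, hA3⟩, -, -⟩ :=
    h p n q n (Or.inr ⟨rfl, rfl⟩) (Or.inr ⟨rfl, rfl⟩)
  have := (hstair i0 j0 i3 j3 (hi0.trans hpn)
      (hj0.trans hqn) hi3n hj3n hA0 hA3).1 (lt_of_lt_of_le hi0 hi3)
  omega
end

section
/- Let V be a linearly ordered vertex set partitioned into consecutive blocks and let X_i, X_j be two disjoint consecutive subsets. Let G be a (bipartite) graph on V whose edges all go between X_i and X_j, with ordered adjacency matrix M. If M admits a rank-(k+2) division for some k ≥ 1, then the submatrix M[X_i, X_j] (or M[X_j, X_i]) admits a rank-k division; i.e., gridrank(M) ≥ k+2 implies gridrank(M[X_i, X_j]) ≥ k (up to swapping i and j). -/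
/-- `A` restricted to rows `[rlo, rhi)` and columns `[clo, chi)` admits a rank-`k`
division: the rows and columns are partitioned into `k` consecutive intervals each,
and every cell contains at least `k` distinct rows and `k` distinct columns. -/
def RankDiv (A : ℕ → ℕ → Prop) (rlo rhi clo chi k : ℕ) : Prop :=
  ∃ r c : ℕ → ℕ, r 0 = rlo ∧ r k = rhi ∧ c 0 = clo ∧ c k = chi ∧
    (∀ a < k, r a < r (a + 1)) ∧ (∀ b < k, c b < c (b + 1)) ∧
    ∀ a < k, ∀ b < k,
      (∃ f : Fin k → ℕ, (∀ s, r a ≤ f s ∧ f s < r (a + 1)) ∧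
        ∀ s s', s ≠ s' → ∃ j, c b ≤ j ∧ j < c (b + 1) ∧ ¬ (A (f s) j ↔ A (f s') j)) ∧
      (∃ g : Fin k → ℕ, (∀ s, c b ≤ g s ∧ g s < c (b + 1)) ∧
        ∀ s s', s ≠ s' → ∃ i, r a ≤ i ∧ i < r (a + 1) ∧ ¬ (A i (g s) ↔ A i (g s')))

lemma mono_aux (r : ℕ → ℕ) (K : ℕ) (h : ∀ a < K, r a < r (a + 1)) :
    ∀ b, b ≤ K → ∀ a, a ≤ b → r a ≤ r b := by
  intro b
  induction b with
  | zero =>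
    intro _ a ha
    have : a = 0 := Nat.le_zero.mp ha
    simp [this]
  | succ n ih =>
    intro hb a ha
    rcases Nat.eq_or_lt_of_le ha with h' | h'
    · exact h' ▸ le_rfl
    · exact le_trans (ih (by omega) a (by omega)) (le_of_lt (h n (by omega)))

lemma prune {n : ℕ} (P Good : ℕ → Prop) (D : ℕ → ℕ → Prop)
    (f : Fin (n + 1) → ℕ) (hP : ∀ i, P (f i))
    (hD : ∀ i j, i ≠ j → D (f i) (f j))
    (hgood : ∀ u u', P u → P u' → D u u' → Good u ∨ Good u') :
    ∃ g : Fin n → ℕ, (∀ i, P (g i) ∧ Good (g i)) ∧ ∀ i j, i ≠ j → D (g i) (g j) := by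
  by_cases h : ∀ i, Good (f i)
  · exact ⟨fun i => f i.castSucc, fun i => ⟨hP _, h _⟩,
      fun i j hij => hD _ _ (fun e => hij (Fin.castSucc_injective _ e))⟩
  · push_neg at h
    obtain ⟨i0, hi0⟩ := h
    refine ⟨fun i => f (i0.succAbove i), fun i => ⟨hP _, ?_⟩,
      fun i j hij => hD _ _ (fun e => hij (Fin.succAbove_right_injective e))⟩
    rcases hgood _ _ (hP (i0.succAbove i)) (hP i0) (hD _ _ (Fin.succAbove_ne i0 i)) with h1 | h2
    · exact h1
    · exact absurd h2 hi0

lemma rankdiv_flip (A : ℕ → ℕ → Prop) (rlo rhi clo chi k : ℕ)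
    (h : RankDiv A rlo rhi clo chi k) :
    RankDiv (fun u v => A v u) clo chi rlo rhi k := by
  obtain ⟨r, c, h1, h2, h3, h4, h5, h6, h7⟩ := h
  exact ⟨c, r, h3, h4, h1, h2, h6, h5,
    fun a ha b hb => ⟨(h7 b hb a ha).2, (h7 b hb a ha).1⟩⟩

lemma half (A : ℕ → ℕ → Prop) (N k x1 x2 y1 y2 : ℕ) (hk : 1 ≤ k)
    (r c : ℕ → ℕ)
    (hrinc : ∀ a < k + 2, r a < r (a + 1)) (hcinc : ∀ b < k + 2, c b < c (b + 1))
    (hrN : r (k + 2) = N) (hcN : c (k + 2) = N)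
    (hcells : ∀ a < k + 2, ∀ b < k + 2,
      (∃ f : Fin (k + 2) → ℕ, (∀ s, r a ≤ f s ∧ f s < r (a + 1)) ∧
        ∀ s s', s ≠ s' → ∃ j, c b ≤ j ∧ j < c (b + 1) ∧ ¬ (A (f s) j ↔ A (f s') j)) ∧
      (∃ g : Fin (k + 2) → ℕ, (∀ s, c b ≤ g s ∧ g s < c (b + 1)) ∧
        ∀ s s', s ≠ s' → ∃ i, r a ≤ i ∧ i < r (a + 1) ∧ ¬ (A i (g s) ↔ A i (g s'))))
    (hedge : ∀ u v, u < N → v < N → A u v → r 1 ≤ u →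
      y1 ≤ u ∧ u < y2 ∧ x1 ≤ v ∧ v < x2)
    (hYrow : ∀ a, 1 ≤ a → a ≤ k → ∃ p, r a ≤ p ∧ p < r (a + 1) ∧ y1 ≤ p ∧ p < y2)
    (hXcol : ∀ b, b < k → ∃ q, c b ≤ q ∧ q < c (b + 1) ∧ x1 ≤ q ∧ q < x2) :
    RankDiv A y1 y2 x1 x2 k := by
  have rmono := mono_aux r (k + 2) hrinc
  have cmono := mono_aux c (k + 2) hcinc
  have hrleN : ∀ a, a ≤ k + 2 → r a ≤ N := fun a ha => hrN ▸ rmono (k + 2) le_rfl a ha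
  have hcleN : ∀ b, b ≤ k + 2 → c b ≤ N := fun b hb => hcN ▸ cmono (k + 2) le_rfl b hb
  have hy : y1 < y2 := by obtain ⟨p, _, _, h3, h4⟩ := hYrow 1 le_rfl hk; omega
  have hx : x1 < x2 := by obtain ⟨q, _, _, h3, h4⟩ := hXcol 0 (by omega); omega
  have hry : ∀ a, 2 ≤ a → a ≤ k → y1 < r a ∧ r a < y2 := by
    intro a h2 hk'
    obtain ⟨p, hp1, hp2, hp3, hp4⟩ := hYrow (a - 1) (by omega) (by omega)
    obtain ⟨q, hq1, hq2, hq3, hq4⟩ := hYrow a (by omega) hk'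
    have ha1 : a - 1 + 1 = a := by omega
    rw [ha1] at hp2
    exact ⟨by omega, by omega⟩
  have hcx : ∀ b, 1 ≤ b → b < k → x1 < c b ∧ c b < x2 := by
    intro b h1 h2
    obtain ⟨p, hp1, hp2, hp3, hp4⟩ := hXcol (b - 1) (by omega)
    obtain ⟨q, hq1, hq2, hq3, hq4⟩ := hXcol b h2
    have hb1 : b - 1 + 1 = b := by omega
    rw [hb1] at hp2
    exact ⟨by omega, by omega⟩
  set R : ℕ → ℕ := fun t => if t = 0 then y1 else if t = k then y2 else r (t + 1) with hR
  set C : ℕ → ℕ := fun s => if s = 0 then x1 else if s = k then x2 else c s with hC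
  have hR0 : R 0 = y1 := by simp [hR]
  have hk0 : ¬ (k = 0) := by omega
  have hRk : R k = y2 := by simp [hR, hk0]
  have hC0 : C 0 = x1 := by simp [hC]
  have hCk : C k = x2 := by simp [hC, hk0]
  have hRmem : ∀ t, t < k → ∀ u, r (t + 1) ≤ u → u < r (t + 1 + 1) → y1 ≤ u → u < y2 →
      R t ≤ u ∧ u < R (t + 1) := by
    intro t ht u h1 h2 h3 h4
    simp only [hR]
    split_ifs <;> first | contradiction | omega
  have hCmem : ∀ s, s < k → ∀ v, c s ≤ v → v < c (s + 1) → x1 ≤ v → v < x2 →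
      C s ≤ v ∧ v < C (s + 1) := by
    intro s hs v h1 h2 h3 h4
    simp only [hC]
    split_ifs <;> first | contradiction | omega
  refine ⟨R, C, hR0, hRk, hC0, hCk, ?_, ?_, ?_⟩
  · intro t ht
    simp only [hR]
    by_cases h0 : t = 0
    · subst h0
      by_cases h1 : k = 1
      · rw [if_pos rfl, if_neg (by omega), if_pos h1.symm]
        exact hy
      · rw [if_pos rfl, if_neg (by omega), if_neg (by omega)]
        exact (hry 2 le_rfl (by omega)).1
    · rw [if_neg h0, if_neg (by omega), if_neg (by omega)]
      by_cases h1 : t + 1 = k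
      · rw [if_pos h1]
        exact (hry (t + 1) (by omega) (by omega)).2
      · rw [if_neg h1]
        exact hrinc (t + 1) (by omega)
  · intro s hs
    simp only [hC]
    by_cases h0 : s = 0
    · subst h0
      by_cases h1 : k = 1
      · rw [if_pos rfl, if_neg (by omega), if_pos h1.symm]
        exact hx
      · rw [if_pos rfl, if_neg (by omega), if_neg (by omega)]
        exact (hcx 1 le_rfl (by omega)).1
    · rw [if_neg h0, if_neg (by omega), if_neg (by omega)]
      by_cases h1 : s + 1 = k
      · rw [if_pos h1]
        exact (hcx s (by omega) (by omega)).2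
      · rw [if_neg h1]
        exact hcinc s (by omega)
  · intro t ht s hs
    obtain ⟨⟨f, hf1, hf2⟩, g, hg1, hg2⟩ := hcells (t + 1) (by omega) s (by omega)
    have classify : ∀ u v, r (t + 1) ≤ u → u < r (t + 1 + 1) → c s ≤ v → v < c (s + 1) →
        A u v → y1 ≤ u ∧ u < y2 ∧ x1 ≤ v ∧ v < x2 := fun u v h1 h2 h3 h4 hA =>
      hedge u v (lt_of_lt_of_le h2 (hrleN (t + 1 + 1) (by omega)))
        (lt_of_lt_of_le h4 (hcleN (s + 1) (by omega))) hA
        (le_trans (rmono (t + 1) (by omega) 1 (by omega)) h1)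
    constructor
    · obtain ⟨f1, hf1', hf2'⟩ := prune (n := k + 1)
        (fun u => r (t + 1) ≤ u ∧ u < r (t + 1 + 1))
        (fun u => y1 ≤ u ∧ u < y2)
        (fun u u' => ∃ v, c s ≤ v ∧ v < c (s + 1) ∧ ¬ (A u v ↔ A u' v))
        f hf1 hf2
        (by
          rintro u u' hu hu' ⟨v, hv1, hv2, hvd⟩
          by_cases hA : A u v
          · have h := classify u v hu.1 hu.2 hv1 hv2 hA
            exact Or.inl ⟨h.1, h.2.1⟩
          · have hA' : A u' v := by tauto
            have h := classify u' v hu'.1 hu'.2 hv1 hv2 hA'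
            exact Or.inr ⟨h.1, h.2.1⟩)
      refine ⟨fun i => f1 i.castSucc, fun i => ?_, fun i j hij => ?_⟩
      · obtain ⟨⟨h1, h2⟩, h3, h4⟩ := hf1' i.castSucc
        exact hRmem t ht _ h1 h2 h3 h4
      · obtain ⟨v, hv1, hv2, hvd⟩ := hf2' i.castSucc j.castSucc
          (fun e => hij (Fin.castSucc_injective _ e))
        have hvx : x1 ≤ v ∧ v < x2 := by
          by_cases hA : A (f1 i.castSucc) v
          · have h := classify _ v (hf1' i.castSucc).1.1 (hf1' i.castSucc).1.2 hv1 hv2 hA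
            exact ⟨h.2.2.1, h.2.2.2⟩
          · have hA' : A (f1 j.castSucc) v := by tauto
            have h := classify _ v (hf1' j.castSucc).1.1 (hf1' j.castSucc).1.2 hv1 hv2 hA'
            exact ⟨h.2.2.1, h.2.2.2⟩
        obtain ⟨m1, m2⟩ := hCmem s hs v hv1 hv2 hvx.1 hvx.2
        exact ⟨v, m1, m2, hvd⟩
    · obtain ⟨g1, hg1', hg2'⟩ := prune (n := k + 1)
        (fun v => c s ≤ v ∧ v < c (s + 1))
        (fun v => x1 ≤ v ∧ v < x2)
        (fun v v' => ∃ u, r (t + 1) ≤ u ∧ u < r (t + 1 + 1) ∧ ¬ (A u v ↔ A u v'))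
        g hg1 hg2
        (by
          rintro v v' hv hv' ⟨u, hu1, hu2, hud⟩
          by_cases hA : A u v
          · have h := classify u v hu1 hu2 hv.1 hv.2 hA
            exact Or.inl ⟨h.2.2.1, h.2.2.2⟩
          · have hA' : A u v' := by tauto
            have h := classify u v' hu1 hu2 hv'.1 hv'.2 hA'
            exact Or.inr ⟨h.2.2.1, h.2.2.2⟩)
      refine ⟨fun i => g1 i.castSucc, fun i => ?_, fun i j hij => ?_⟩
      · obtain ⟨⟨h1, h2⟩, h3, h4⟩ := hg1' i.castSucc
        exact hCmem s hs _ h1 h2 h3 h4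
      · obtain ⟨u, hu1, hu2, hud⟩ := hg2' i.castSucc j.castSucc
          (fun e => hij (Fin.castSucc_injective _ e))
        have huy : y1 ≤ u ∧ u < y2 := by
          by_cases hA : A u (g1 i.castSucc)
          · have h := classify u _ hu1 hu2 (hg1' i.castSucc).1.1 (hg1' i.castSucc).1.2 hA
            exact ⟨h.1, h.2.1⟩
          · have hA' : A u (g1 j.castSucc) := by tauto
            have h := classify u _ hu1 hu2 (hg1' j.castSucc).1.1 (hg1' j.castSucc).1.2 hA'
            exact ⟨h.1, h.2.1⟩
        obtain ⟨m1, m2⟩ := hRmem t ht u hu1 hu2 huy.1 huy.2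
        exact ⟨u, m1, m2, hud⟩

lemma key (N k : ℕ) (hk : 1 ≤ k) (G : ℕ → ℕ → Prop)
    (x1 x2 y1 y2 : ℕ) (hord : x2 ≤ y1)
    (hedges : ∀ u v, u < N → v < N → G u v →
      (x1 ≤ u ∧ u < x2 ∧ y1 ≤ v ∧ v < y2) ∨
      (y1 ≤ u ∧ u < y2 ∧ x1 ≤ v ∧ v < x2))
    (hdiv : RankDiv G 0 N 0 N (k + 2)) :
    RankDiv G x1 x2 y1 y2 k ∨ RankDiv G y1 y2 x1 x2 k := by
  obtain ⟨r, c, hr0, hrk, hc0, hck, hrinc, hcinc, hcell⟩ := hdiv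
  have rmono := mono_aux r (k + 2) hrinc
  have cmono := mono_aux c (k + 2) hcinc
  have hrleN : ∀ a, a ≤ k + 2 → r a ≤ N := fun a ha => hrk ▸ rmono (k + 2) le_rfl a ha
  have hcleN : ∀ b, b ≤ k + 2 → c b ≤ N := fun b hb => hck ▸ cmono (k + 2) le_rfl b hb
  have celledge : ∀ a, a < k + 2 → ∀ b, b < k + 2 → ∃ u v, r a ≤ u ∧ u < r (a + 1) ∧
      c b ≤ v ∧ v < c (b + 1) ∧ u < N ∧ v < N ∧ G u v := by
    intro a ha b hb
    obtain ⟨⟨f, hf1, hf2⟩, -⟩ := hcell a ha b hb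
    have h01 : (0 : Fin (k + 2)) ≠ 1 := by
      simp [Fin.ext_iff]
    obtain ⟨v, hv1, hv2, hvd⟩ := hf2 0 1 h01
    have hvN : v < N := lt_of_lt_of_le hv2 (hcleN (b + 1) (by omega))
    by_cases hA : G (f 0) v
    · exact ⟨f 0, v, (hf1 0).1, (hf1 0).2, hv1, hv2,
        lt_of_lt_of_le (hf1 0).2 (hrleN (a + 1) (by omega)), hvN, hA⟩
    · have hA' : G (f 1) v := by tauto
      exact ⟨f 1, v, (hf1 1).1, (hf1 1).2, hv1, hv2,
        lt_of_lt_of_le (hf1 1).2 (hrleN (a + 1) (by omega)), hvN, hA'⟩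
  obtain ⟨u0, v0, hu01, hu02, hv01, hv02, hu0N, hv0N, hG0⟩ :=
    celledge 0 (by omega) 0 (by omega)
  have hu02' : u0 < r 1 := hu02
  have hv02' : v0 < c 1 := hv02
  rcases hedges u0 v0 hu0N hv0N hG0 with hcase | hcase
  · -- u0 ∈ X, v0 ∈ Y: use columns as Y-side (flip)
    have hy0 : y1 ≤ v0 := hcase.2.2.1
    have hedge' : ∀ u v, u < N → v < N → G v u → c 1 ≤ u →
        y1 ≤ u ∧ u < y2 ∧ x1 ≤ v ∧ v < x2 := by
      intro u v hu hv hG hc1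
      rcases hedges v u hv hu hG with h | h
      · exact ⟨h.2.2.1, h.2.2.2, h.1, h.2.1⟩
      · exfalso
        have := h.2.2.2
        omega
    have hYrow' : ∀ a, 1 ≤ a → a ≤ k → ∃ p, c a ≤ p ∧ p < c (a + 1) ∧ y1 ≤ p ∧ p < y2 := by
      intro a h1 h2
      obtain ⟨u, v, hu1, hu2, hv1, hv2, huN, hvN, hG⟩ :=
        celledge 0 (by omega) a (by omega)
      have hv' : c 1 ≤ v := le_trans (cmono a (by omega) 1 h1) hv1
      have h := hedge' v u hvN huN hG hv'
      exact ⟨v, hv1, hv2, h.1, h.2.1⟩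
    have hXcol' : ∀ b, b < k → ∃ q, r b ≤ q ∧ q < r (b + 1) ∧ x1 ≤ q ∧ q < x2 := by
      intro b hb
      obtain ⟨u, v, hu1, hu2, hv1, hv2, huN, hvN, hG⟩ :=
        celledge b (by omega) 1 (by omega)
      have hv' : c 1 ≤ v := hv1
      have h := hedge' v u hvN huN hG hv'
      exact ⟨u, hu1, hu2, h.2.2.1, h.2.2.2⟩
    have hh := half (fun u v => G v u) N k x1 x2 y1 y2 hk c r hcinc hrinc hck hrk
      (fun a ha b hb => ⟨(hcell b hb a ha).2, (hcell b hb a ha).1⟩)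
      hedge' hYrow' hXcol'
    exact Or.inl (rankdiv_flip _ y1 y2 x1 x2 k hh)
  · -- u0 ∈ Y, v0 ∈ X: direct
    have hy0 : y1 ≤ u0 := hcase.1
    have hedge' : ∀ u v, u < N → v < N → G u v → r 1 ≤ u →
        y1 ≤ u ∧ u < y2 ∧ x1 ≤ v ∧ v < x2 := by
      intro u v hu hv hG hr1
      rcases hedges u v hu hv hG with h | h
      · exfalso
        have := h.2.1
        omega
      · exact h
    have hYrow' : ∀ a, 1 ≤ a → a ≤ k → ∃ p, r a ≤ p ∧ p < r (a + 1) ∧ y1 ≤ p ∧ p < y2 := by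
      intro a h1 h2
      obtain ⟨u, v, hu1, hu2, hv1, hv2, huN, hvN, hG⟩ :=
        celledge a (by omega) 0 (by omega)
      have hu' : r 1 ≤ u := le_trans (rmono a (by omega) 1 h1) hu1
      have h := hedge' u v huN hvN hG hu'
      exact ⟨u, hu1, hu2, h.1, h.2.1⟩
    have hXcol' : ∀ b, b < k → ∃ q, c b ≤ q ∧ q < c (b + 1) ∧ x1 ≤ q ∧ q < x2 := by
      intro b hb
      obtain ⟨u, v, hu1, hu2, hv1, hv2, huN, hvN, hG⟩ :=
        celledge 1 (by omega) b (by omega)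
      have h := hedge' u v huN hvN hG hu1
      exact ⟨v, hv1, hv2, h.2.2.1, h.2.2.2⟩
    exact Or.inr (half G N k x1 x2 y1 y2 hk r c hrinc hcinc hrk hck hcell
      hedge' hYrow' hXcol')

/-- Let `V = {0, ..., N-1}` be a linearly ordered vertex set, let `X_i = [xi1, xi2)`
and `X_j = [xj1, xj2)` be disjoint consecutive subsets, and let `G` be a graph on `V`
all of whose edges go between `X_i` and `X_j`, with ordered adjacency matrix
`A u v = G u v`. If the adjacency matrix admits a rank-`(k+2)` division (`k ≥ 1`),
then the submatrix `A[X_i, X_j]` or the submatrix `A[X_j, X_i]` admits a rank-`k`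
division. -/
theorem stmt7 (N k : ℕ) (hk : 1 ≤ k) (G : ℕ → ℕ → Prop)
    (xi1 xi2 xj1 xj2 : ℕ)
    (hxi : xi1 ≤ xi2) (hxj : xj1 ≤ xj2) (hiN : xi2 ≤ N) (hjN : xj2 ≤ N)
    (hdisj : xi2 ≤ xj1 ∨ xj2 ≤ xi1)
    (hedges : ∀ u v, u < N → v < N → G u v →
      (xi1 ≤ u ∧ u < xi2 ∧ xj1 ≤ v ∧ v < xj2) ∨
      (xj1 ≤ u ∧ u < xj2 ∧ xi1 ≤ v ∧ v < xi2))
    (hdiv : RankDiv G 0 N 0 N (k + 2)) :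
    RankDiv G xi1 xi2 xj1 xj2 k ∨ RankDiv G xj1 xj2 xi1 xi2 k := by
  rcases hdisj with h | h
  · exact key N k hk G xi1 xi2 xj1 xj2 h hedges hdiv
  · have h' : ∀ u v, u < N → v < N → G u v →
        (xj1 ≤ u ∧ u < xj2 ∧ xi1 ≤ v ∧ v < xi2) ∨
        (xi1 ≤ u ∧ u < xi2 ∧ xj1 ≤ v ∧ v < xj2) :=
      fun u v hu hv hG => (hedges u v hu hv hG).symm
    exact (key N k hk G xj1 xj2 xi1 xi2 h h' hdiv).symm
end

section
/- Let G be a directed graph with terminal pairs and let S, S' be two vertex sets with S' = (S \ S_v) ∪ S'_v where S_v ⊆ S is a minimal (v, T)-separator and S'_v is a (v, T)-separator with R⁺_{G−S_v}(v) ⊊ R⁺_{G−S'_v}(v). Then every vertex x ∈ S \ S' lies in the reverse shadow of S': no terminal in T is reachable from x in G − S'. -/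
/-!
Let `x ∈ S \ S'`, so `x ∈ S_v \ S'_v`. By minimality `S_v \ {x}` is not a `(v, T)`-separator,
and a path from `v` to `T` avoiding it must enter `x` from a vertex `c` reachable from `v` in
`G − S_v`. Then `c` is reachable from `v` in `G − S'_v` too, and since `x ∉ S'_v` so is `x`.
A path from `x` to `T` in `G − S'` would extend this to a path from `v` to `T` in `G − S'_v`.
-/

/-- `b` is reachable from `a` in the directed graph `G` with the vertex set `S`
deleted. -/
def Reach {V : Type*} (G : V → V → Prop) (S : Set V) (a b : V) : Prop :=
  Relation.ReflTransGen (fun u v => u ∉ S ∧ v ∉ S ∧ G u v) a b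

/-- `X` is a `(v, T)`-separator in `G`: it avoids `T ∪ {v}` and after deleting it no
vertex of `T` is reachable from `v`. -/
def IsSep {V : Type*} (G : V → V → Prop) (v : V) (T : Set V) (X : Set V) : Prop :=
  X ⊆ (T ∪ {v})ᶜ ∧ ∀ u ∈ T, ¬ Reach G X v u

namespace Reach

variable {V : Type*} {G : V → V → Prop} {X Y : Set V} {a b : V}

lemma notMem (h : Reach G X a b) (ha : a ∉ X) : b ∉ X := by
  induction h with
  | refl => exact ha
  | tail _ hedge _ => exact hedge.2.1

lemma anti (h : Reach G Y a b) (hXY : X ⊆ Y) : Reach G X a b :=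
  Relation.ReflTransGen.mono
    (fun _ _ ⟨hu, hw, huw⟩ => ⟨fun hu' => hu (hXY hu'), fun hw' => hw (hXY hw'), huw⟩) _ _ h

lemma or_exists_of_diff_singleton {x : V} (h : Reach G (X \ {x}) a b) (ha : a ∉ X) :
    Reach G X a b ∨ ∃ c, Reach G X a c ∧ G c x := by
  induction h with
  | refl => exact Or.inl .refl
  | @tail b c _ hedge ih =>
    obtain ⟨-, hc, hbc⟩ := hedge
    rcases ih with hab | hx
    · have hb : b ∉ X := hab.notMem ha
      by_cases hcX : c ∈ X
      · have hcx : c = x := by_contra fun hne => hc ⟨hcX, hne⟩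
        exact Or.inr ⟨b, hab, hcx ▸ hbc⟩
      · exact Or.inl (hab.tail ⟨hb, hcX, hbc⟩)
    · exact Or.inr hx

end Reach

namespace IsSep

variable {V : Type*} {G : V → V → Prop} {v : V} {T X : Set V}

lemma notMem_source (hX : IsSep G v T X) : v ∉ X :=
  fun hv => hX.1 hv (Or.inr rfl)

lemma exists_reach_diff_singleton (hX : IsSep G v T X)
    (hmin : ∀ Y : Set V, Y ⊂ X → ¬ IsSep G v T Y) {x : V} (hx : x ∈ X) : ∃ u ∈ T, Reach G (X \ {x}) v u := by
  by_contra! hsep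
  exact hmin (X \ {x}) (Set.sdiff_singleton_ssubset.2 hx) ⟨Set.sdiff_subset.trans hX.1, hsep⟩

lemma exists_reach_adj_of_minimal (hX : IsSep G v T X)
    (hmin : ∀ Y : Set V, Y ⊂ X → ¬ IsSep G v T Y) {x : V} (hx : x ∈ X) :
    ∃ c, Reach G X v c ∧ G c x := by
  obtain ⟨u, hu, hvu⟩ := hX.exists_reach_diff_singleton hmin hx
  exact (hvu.or_exists_of_diff_singleton hX.notMem_source).resolve_left (hX.2 u hu)

end IsSep

theorem stmt10_general {V : Type*} (G : V → V → Prop) (T : Set V)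
    (v : V)
    (Sv S'v S : Set V)
    (hSvSep : IsSep G v T Sv)
    (hSvMin : ∀ Y : Set V, Y ⊂ Sv → ¬ IsSep G v T Y)
    (hS'vSep : IsSep G v T S'v)
    (hreach : {w | Reach G Sv v w} ⊂ {w | Reach G S'v v w})
    (S' : Set V) (hS' : S' = (S \ Sv) ∪ S'v) :
    ∀ x ∈ S \ S', ∀ u ∈ T, ¬ Reach G S' x u := by
  subst hS'
  rintro x ⟨hxS, hxS'⟩ u hu hxu
  have hxSv : x ∈ Sv := by_contra fun h => hxS' (Or.inl ⟨hxS, h⟩)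
  have hxS'v : x ∉ S'v := fun h => hxS' (Or.inr h)
  obtain ⟨c, hvc, hcx⟩ := hSvSep.exists_reach_adj_of_minimal hSvMin hxSv
  have hvc' : Reach G S'v v c := hreach.1 hvc
  have hvx : Reach G S'v v x := hvc'.tail ⟨hvc'.notMem hS'vSep.notMem_source, hxS'v, hcx⟩
  exact hS'vSep.2 u hu (hvx.trans (hxu.anti Set.subset_union_right))

/-- Let `S_v ⊆ S` be a minimal `(v,T)`-separator and `S'_v` a `(v,T)`-separator with
`|S'_v| ≤ |S_v|` whose reachability set `R⁺_{G−S'_v}(v)` strictly contains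
`R⁺_{G−S_v}(v)`, and let `S' = (S \ S_v) ∪ S'_v`. Then every `x ∈ S \ S'` lies in the
reverse shadow of `S'`: no terminal of `T` is reachable from `x` in `G − S'`. -/
theorem stmt10 {V : Type*} [Fintype V] (G : V → V → Prop) (T : Set V)
    (v : V) (hvT : v ∉ T)
    (Sv S'v S : Set V)
    (hSvS : Sv ⊆ S)
    (hSvSep : IsSep G v T Sv)
    (hSvMin : ∀ Y : Set V, Y ⊂ Sv → ¬ IsSep G v T Y)
    (hS'vSep : IsSep G v T S'v)
    (hcard : S'v.ncard ≤ Sv.ncard)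
    (hreach : {w | Reach G Sv v w} ⊂ {w | Reach G S'v v w})
    (S' : Set V) (hS' : S' = (S \ Sv) ∪ S'v) :
    ∀ x ∈ S \ S', ∀ u ∈ T, ¬ Reach G S' x u :=
  stmt10_general G T v Sv S'v S hSvSep hSvMin hS'vSep hreach S' hS'
end

section
/- Consider the CSP encoding of Multicolored Clique: for a graph G with V(G) partitioned into k independent sets V₁,...,V_k each of size n, with variables x_i over {0,...,n−1} and y_{i,j} over {0,...,n−1}² ordered lexicographically. The constraint 'y_{i,j} = (a,b) implies x_i = a' (for all a,b) is equivalent to the conjunction over 0 ≤ a < n−1 of (x_i ≤ a) ∨ (y_{i,j} ≥ (a+1,0)) together with the conjunction over 1 ≤ a < n of (y_{i,j} ≤ (a−1,n−1)) ∨ (x_i ≥ a). -/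
/-- Lexicographic order on pairs of naturals. -/
def lexLe (a b : ℕ × ℕ) : Prop := a.1 < b.1 ∨ (a.1 = b.1 ∧ a.2 ≤ b.2)

/-- In the CSP encoding of Multicolored Clique, with `x` ranging over `{0, ..., n-1}`
and `y` over `{0, ..., n-1}²` ordered lexicographically, the constraint
"`y = (a,b)` implies `x = a`" is equivalent to the conjunction, over `0 ≤ a < n-1`,
of `(x ≤ a) ∨ (y ≥ (a+1, 0))`, together with the conjunction, over `1 ≤ a < n`, of
`(y ≤ (a-1, n-1)) ∨ (x ≥ a)`. -/
theorem stmt13 (n : ℕ) (hn : 1 ≤ n) (x : ℕ) (y : ℕ × ℕ)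
    (hx : x < n) (hy1 : y.1 < n) (hy2 : y.2 < n) :
    (∀ a b : ℕ, y = (a, b) → x = a) ↔
      ((∀ a, a < n - 1 → (x ≤ a ∨ lexLe (a + 1, 0) y)) ∧
       (∀ a, 1 ≤ a → a < n → (lexLe y (a - 1, n - 1) ∨ a ≤ x))) := by
  have hxy : (∀ a b : ℕ, y = (a, b) → x = a) ↔ x = y.1 := by
    constructor
    · intro h; exact h y.1 y.2 rfl
    · rintro h a b rfl; exact h
  rw [hxy]
  unfold lexLe
  constructor
  · intro h
    constructor
    · intro a ha; simp only []; omega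
    · intro a ha1 ha2; simp only []; omega
  · rintro ⟨h1, h2⟩
    by_contra hne
    rcases Nat.lt_or_ge x y.1 with hlt | hge
    · have := h2 y.1 (by omega) hy1
      simp only [] at this; omega
    · have hx' : y.1 < x := by omega
      have := h1 y.1 (by omega)
      simp only [] at this; omega
end
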